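/- Fix integers d ≥ 2, N ≥ 1, K ≥ 1. Define the matrix V with rows indexed by triples (a',b',b) and columns indexed by a, where a,a' : Fin N → Fin d and b,b' : Fin K → Fin d, by V((a',b',b), a) := sqrt(d_S^N / d_S^{N+K}) · Π_sym^{(N+K)}((a',b'),(a,b)). Then V† V = Π_sym^{(N)}; in particular, V restricts to an isometry from the symmetric subspace of (ℂ^d)^{⊗N} into (ℂ^d)^{⊗N} ⊗ (ℂ^d)^{⊗K} ⊗ (ℂ^d)^{⊗K}. This V is the common Stinespring isometry realising simultaneously the optimal N→K transposition channel and the optimal N→N+K cloning channel. -/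

import Mathlib

open Matrix Kronecker BigOperators ComplexOrder

noncomputable section

/-- The matrix of the permutation `π ∈ S_M` acting on the `M` tensor factors of `(ℂ^d)^{⊗M}`. -/
def permMat (d M : ℕ) (π : Equiv.Perm (Fin M)) :
    Matrix (Fin M → Fin d) (Fin M → Fin d) ℂ :=
  Matrix.of fun x y => if x = y ∘ π.symm then 1 else 0

/-- The orthogonal projector onto the symmetric subspace of `(ℂ^d)^{⊗M}`. -/
def symProj (d M : ℕ) : Matrix (Fin M → Fin d) (Fin M → Fin d) ℂ :=
  ((M.factorial : ℂ))⁻¹ • ∑ π : Equiv.Perm (Fin M), permMat d M π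

/-- The dimension `d_S^M = binom(M+d-1, d-1)` of the symmetric subspace of `(ℂ^d)^{⊗M}`. -/
def dS (d M : ℕ) : ℕ := (M + d - 1).choose (d - 1)

/-- Regard a pair of tuples as a single tuple via `Fin (N+K) ≃ Fin N ⊕ Fin K`. -/
def pairToFun (d N K : ℕ) (x : Fin N → Fin d) (o : Fin K → Fin d) :
    Fin (N + K) → Fin d :=
  fun i => Sum.elim x o (finSumFinEquiv.symm i)

/-- The projector onto the symmetric subspace of `(ℂ^d)^{⊗(N+K)}`, regarded as a matrix
indexed by pairs `((x,o),(x',o'))`. -/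
def symProjNK (d N K : ℕ) :
    Matrix ((Fin N → Fin d) × (Fin K → Fin d)) ((Fin N → Fin d) × (Fin K → Fin d)) ℂ :=
  Matrix.of fun p q =>
    symProj d (N + K) (pairToFun d N K p.1 p.2) (pairToFun d N K q.1 q.2)

/-- Partial trace over the output (second) factor. -/
def trOut {d N K : ℕ}
    (J : Matrix ((Fin N → Fin d) × (Fin K → Fin d)) ((Fin N → Fin d) × (Fin K → Fin d)) ℂ) :
    Matrix (Fin N → Fin d) (Fin N → Fin d) ℂ :=
  Matrix.of fun x x' => ∑ o : Fin K → Fin d, J (x, o) (x', o)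

/-- The Stinespring isometry `V((a',b',b), a) = sqrt(d_S^N/d_S^{N+K}) Π_sym^{(N+K)}((a',b'),(a,b))`
realising simultaneously optimal `N→K` transposition and optimal `N→N+K` cloning. -/
def stIso (d N K : ℕ) :
    Matrix ((Fin N → Fin d) × (Fin K → Fin d) × (Fin K → Fin d)) (Fin N → Fin d) ℂ :=
  Matrix.of fun p a =>
    (Real.sqrt ((dS d N : ℝ) / (dS d (N + K) : ℝ)) : ℂ) *
      symProjNK d N K (p.1, p.2.1) (a, p.2.2)

/-!
Write `P` for `Π_sym^{(N+K)}`. Since `P` is a Hermitian idempotent, `V†V` is `d_S^N / d_S^{N+K}`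
times the partial trace of `P` over its last `K` tensor factors. The entries of `Π_sym^{(M)}`
count permutations, `Π_sym^{(M)}(x, y) = #{π | x ∘ π = y} / M!`, and this count is `∏ᵢ mᵢ!`
when the words `x` and `y` have the same letter counts `m`, and `0` otherwise. Summing over the
traced-out word `b` gives `∑_b ∏ᵢ (mᵢ + #b⁻¹(i))! = ∏ᵢ mᵢ! · (N+d)(N+d+1)⋯(N+d+K-1)` by
induction on `K`, so the partial trace is `N! (N+d)⋯(N+d+K-1) / (N+K)! · Π_sym^{(N)}`, and that
scalar is `d_S^{N+K} / d_S^N`.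
-/
open Finset Equiv Nat

section FiberCard

variable {α ι : Type*} [Fintype α] [DecidableEq ι]

def fiberCard (f : α → ι) (i : ι) : ℕ := #{a | f a = i}

lemma fiberCard_comp_equiv {α' : Type*} [Fintype α'] (f : α → ι) (e : α' ≃ α) :
    fiberCard (f ∘ e) = fiberCard f := by
  funext i
  exact card_equiv e (by simp)

lemma fiberCard_sumElim {β : Type*} [Fintype β] (f : α → ι) (g : β → ι) (i : ι) :
    fiberCard (Sum.elim f g) i = fiberCard f i + fiberCard g i := by
  simp only [fiberCard, card_filter, Fintype.sum_sum_type, Sum.elim_inl, Sum.elim_inr]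
  rfl

lemma fiberCard_cons {n : ℕ} (o : ι) (b : Fin n → ι) (i : ι) :
    fiberCard (Fin.cons o b : Fin (n + 1) → ι) i = fiberCard b i + if i = o then 1 else 0 := by
  simp only [fiberCard, card_filter, Fin.sum_univ_succ, Fin.cons_zero, Fin.cons_succ,
    eq_comm (a := o)]
  ring

lemma sum_fiberCard [Fintype ι] (f : α → ι) : ∑ i, fiberCard f i = Fintype.card α := by
  rw [Fintype.card, card_eq_sum_card_fiberwise (f := f) fun a _ => mem_univ (f a)]
  rfl

lemma card_perm_comp_eq [Fintype ι] [DecidableEq α] (f g : α → ι) :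
    #{π : Perm α | f ∘ π = g} =
      if fiberCard f = fiberCard g then ∏ i, (fiberCard g i)! else 0 := by
  split_ifs with h
  · have hfib (i : ι) : Fintype.card {a // g a = i} = Fintype.card {a // f a = i} := by
      rw [Fintype.card_subtype, Fintype.card_subtype]
      exact (congrFun h i).symm
    set π₀ : Perm α := Equiv.ofFiberEquiv fun i => Fintype.equivOfCardEq (hfib i)
    have hπ₀ : f ∘ π₀ = g := funext (Equiv.ofFiberEquiv_map _)
    have hstab : #{π : Perm α | f ∘ π = g} = #{σ : Perm α | g ∘ σ = g} := by
      refine card_nbij' (π₀⁻¹ * ·) (π₀ * ·) ?_ ?_ ?_ ?_ <;> intro π hπ <;>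
        simp only [coe_filter, mem_univ, true_and, Set.mem_ofPred_eq] at hπ ⊢
      · funext a
        calc g (π₀⁻¹ (π a)) = f (π₀ (π₀⁻¹ (π a))) := (congrFun hπ₀ _).symm
          _ = g a := by simpa using congrFun hπ a
      · rw [Perm.coe_mul, ← Function.comp_assoc, hπ₀, hπ]
      · exact mul_inv_cancel_left π₀ π
      · exact inv_mul_cancel_left π₀ π
    rw [hstab, ← Fintype.card_subtype, DomMulAct.stabilizer_card]
    simp only [Fintype.card_subtype, fiberCard]
  · refine card_eq_zero.mpr (filter_eq_empty_iff.mpr fun π _ hπ => h ?_)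
    rw [← hπ, fiberCard_comp_equiv]

end FiberCard

section FactorialSum

variable {ι : Type*} [Fintype ι] [DecidableEq ι]

lemma prod_factorial_add_ite (m : ι → ℕ) (o : ι) :
    ∏ i, (m i + if i = o then 1 else 0)! = (m o + 1) * ∏ i, (m i)! := by
  rw [← mul_prod_erase univ _ (mem_univ o), ← mul_prod_erase univ (fun i => (m i)!) (mem_univ o),
    if_pos rfl, factorial_succ, mul_assoc]
  congr 2
  exact prod_congr rfl fun i hi => by rw [if_neg (ne_of_mem_erase hi), add_zero]

lemma sum_prod_factorial_add_fiberCard (K : ℕ) (m : ι → ℕ) :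
    ∑ b : Fin K → ι, ∏ i, (m i + fiberCard b i)! =
      (∏ i, (m i)!) * (∑ i, m i + Fintype.card ι).ascFactorial K := by
  induction K with
  | zero => simp [fiberCard]
  | succ K ih =>
    rw [← (Fin.consEquiv fun _ => ι).sum_comp, Fintype.sum_prod_type, sum_comm]
    have hstep (b : Fin K → ι) :
        ∑ o, ∏ i, (m i + fiberCard (Fin.cons o b : Fin (K + 1) → ι) i)! =
          (∑ i, m i + Fintype.card ι + K) * ∏ i, (m i + fiberCard b i)! := by
      simp_rw [fiberCard_cons, ← add_assoc, prod_factorial_add_ite, ← sum_mul]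
      rw [sum_add_distrib, sum_add_distrib, sum_fiberCard, Fintype.card_fin, sum_const,
        Finset.card_univ, smul_eq_mul, mul_one]
      ring
    refine (sum_congr rfl fun b _ => hstep b).trans ?_
    rw [← mul_sum, ih, ascFactorial_succ]
    ring

end FactorialSum

lemma dS_mul_factorial_mul_ascFactorial {d : ℕ} (hd : 1 ≤ d) (N K : ℕ) :
    dS d N * N ! * (N + d).ascFactorial K = dS d (N + K) * (N + K)! := by
  obtain ⟨e, rfl⟩ : ∃ e, d = e + 1 := ⟨d - 1, by omega⟩
  have hdS (n : ℕ) : dS (e + 1) n * n ! * e ! = (n + e)! := by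
    rw [dS, Nat.add_sub_cancel, ← add_assoc, Nat.add_sub_cancel,
      add_choose_mul_factorial_mul_factorial]
  apply Nat.eq_of_mul_eq_mul_right (factorial_pos e)
  rw [mul_right_comm, hdS, hdS, ← add_assoc, factorial_mul_ascFactorial, add_right_comm]

lemma dS_div_mul_ascFactorial_mul_factorial_div {d : ℕ} (hd : 1 ≤ d) (N K : ℕ) :
    (dS d N / dS d (N + K) : ℂ) * (((N + d).ascFactorial K * N ! : ℕ) / (N + K)! : ℂ) = 1 := by
  have hdS : (dS d (N + K) : ℂ) ≠ 0 := Nat.cast_ne_zero.mpr (Nat.choose_pos (by omega)).ne'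
  have key : ((dS d N * N ! * (N + d).ascFactorial K : ℕ) : ℂ) = (dS d (N + K) * (N + K)! : ℕ) :=
    congrArg _ (dS_mul_factorial_mul_ascFactorial hd N K)
  push_cast at key ⊢
  field_simp
  linear_combination key

section Permutations

variable (d M : ℕ)

lemma symProj_apply (x y : Fin M → Fin d) :
    symProj d M x y = #{π : Perm (Fin M) | x ∘ π = y} / (M ! : ℂ) := by
  rw [symProj, Matrix.smul_apply, Matrix.sum_apply, card_filter, Nat.cast_sum, div_eq_inv_mul,
    smul_eq_mul]
  simp [permMat, Equiv.eq_comp_symm]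

lemma permMat_mul (π σ : Perm (Fin M)) : permMat d M π * permMat d M σ = permMat d M (π * σ) := by
  ext x z
  simp only [permMat, mul_apply, of_apply, mul_ite, mul_one, mul_zero, sum_ite_eq', mem_univ,
    if_true]
  rfl

lemma symProj_mul_self : symProj d M * symProj d M = symProj d M := by
  have hsum (π : Perm (Fin M)) :
      permMat d M π * ∑ σ, permMat d M σ = ∑ σ, permMat d M σ := by
    rw [mul_sum]
    simp_rw [permMat_mul]
    exact Fintype.sum_equiv (Equiv.mulLeft π) _ _ fun _ => rfl
  rw [symProj, smul_mul_smul, sum_mul]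
  simp_rw [hsum]
  rw [sum_const, Finset.card_univ, Fintype.card_perm, Fintype.card_fin,
    ← Nat.cast_smul_eq_nsmul ℂ, smul_smul]
  congr 1
  field_simp

lemma card_perm_comp_eq_comm (x y : Fin M → Fin d) :
    #{π : Perm (Fin M) | x ∘ π = y} = #{π : Perm (Fin M) | y ∘ π = x} := by
  refine card_nbij' (·⁻¹) (·⁻¹) ?_ ?_ (fun π _ => inv_inv π) (fun π _ => inv_inv π) <;>
    intro π hπ <;> simp only [coe_filter, mem_univ, true_and, Set.mem_ofPred_eq] at hπ ⊢ <;>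
    rw [← hπ] <;> ext <;> simp

lemma symProj_isHermitian : (symProj d M).IsHermitian := by
  ext x y
  rw [conjTranspose_apply, symProj_apply, symProj_apply, star_div₀, star_natCast, star_natCast,
    card_perm_comp_eq_comm]

end Permutations

section Pairs

variable (d N K : ℕ)

def pairEquiv : (Fin N → Fin d) × (Fin K → Fin d) ≃ (Fin (N + K) → Fin d) :=
  (Equiv.sumArrowEquivProdArrow _ _ _).symm.trans (finSumFinEquiv.arrowCongr (Equiv.refl _))

lemma symProjNK_eq_submatrix :
    symProjNK d N K = (symProj d (N + K)).submatrix (pairEquiv d N K) (pairEquiv d N K) :=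
  rfl

lemma symProjNK_isHermitian : (symProjNK d N K).IsHermitian := by
  rw [symProjNK_eq_submatrix]
  exact (symProj_isHermitian d (N + K)).submatrix _

lemma symProjNK_mul_self : symProjNK d N K * symProjNK d N K = symProjNK d N K := by
  rw [symProjNK_eq_submatrix, submatrix_mul_equiv, symProj_mul_self]

variable {d N K}

lemma fiberCard_pairToFun (x : Fin N → Fin d) (o : Fin K → Fin d) (i : Fin d) :
    fiberCard (pairToFun d N K x o) i = fiberCard x i + fiberCard o i := by
  rw [show pairToFun d N K x o = Sum.elim x o ∘ finSumFinEquiv.symm from rfl,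
    fiberCard_comp_equiv, fiberCard_sumElim]

lemma sum_card_perm_pairToFun (a a' : Fin N → Fin d) :
    ∑ b : Fin K → Fin d,
        #{π : Perm (Fin (N + K)) | pairToFun d N K a b ∘ π = pairToFun d N K a' b} =
      #{σ : Perm (Fin N) | a ∘ σ = a'} * (N + d).ascFactorial K := by
  have hfib (b : Fin K → Fin d) :
      fiberCard (pairToFun d N K a b) = fiberCard (pairToFun d N K a' b) ↔
        fiberCard a = fiberCard a' := by
    simp only [funext_iff, fiberCard_pairToFun, Nat.add_right_cancel_iff]
  simp_rw [card_perm_comp_eq, hfib]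
  split_ifs
  · simp_rw [fiberCard_pairToFun]
    rw [sum_prod_factorial_add_fiberCard, sum_fiberCard, Fintype.card_fin, Fintype.card_fin]
  · simp

lemma trOut_symProjNK :
    trOut (symProjNK d N K) =
      (((N + d).ascFactorial K * N ! : ℕ) / (N + K)! : ℂ) • symProj d N := by
  ext a a'
  simp only [trOut, symProjNK, of_apply, Matrix.smul_apply, smul_eq_mul, symProj_apply]
  rw [← sum_div, ← Nat.cast_sum, sum_card_perm_pairToFun]
  push_cast
  field_simp

end Pairs

section Reshape

variable {ι κ R : Type*} [Fintype ι] [Fintype κ] [NonUnitalNonAssocSemiring R] [Star R]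

def moveSecondIndex (J : Matrix (ι × κ) (ι × κ) R) : Matrix (ι × κ × κ) ι R :=
  of fun p a => J (p.1, p.2.1) (a, p.2.2)

lemma conjTranspose_moveSecondIndex_mul_self (J : Matrix (ι × κ) (ι × κ) R) :
    (moveSecondIndex J)ᴴ * moveSecondIndex J = of fun a a' => ∑ b, (Jᴴ * J) (a, b) (a', b) := by
  ext a a'
  simp only [mul_apply, conjTranspose_apply, moveSecondIndex, of_apply, Fintype.sum_prod_type]
  exact (sum_congr rfl fun x _ => sum_comm).trans sum_comm

end Reshape

theorem stmt4_general (d N K : ℕ) (hd : 2 ≤ d) :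
    (stIso d N K)ᴴ * stIso d N K = symProj d N := by
  set c : ℂ := (Real.sqrt ((dS d N : ℝ) / (dS d (N + K) : ℝ)) : ℂ)
  have hV : stIso d N K = c • moveSecondIndex (symProjNK d N K) := rfl
  have hc : star c * c = dS d N / dS d (N + K) := by
    rw [Complex.star_def, Complex.conj_ofReal, ← Complex.ofReal_mul,
      Real.mul_self_sqrt (by positivity)]
    push_cast
    rfl
  rw [hV, conjTranspose_smul, Matrix.smul_mul, Matrix.mul_smul, smul_smul,
    conjTranspose_moveSecondIndex_mul_self, (symProjNK_isHermitian d N K).eq, symProjNK_mul_self]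
  change _ • trOut (symProjNK d N K) = _
  rw [trOut_symProjNK, smul_smul, hc, dS_div_mul_ascFactorial_mul_factorial_div (by omega),
    one_smul]

/-- `V† V = Π_sym^{(N)}`: the Stinespring dilation `V` is an isometry on the symmetric
subspace of `(ℂ^d)^{⊗N}`. -/
theorem stmt4 (d N K : ℕ) (hd : 2 ≤ d) (hN : 1 ≤ N) (hK : 1 ≤ K) :
    (stIso d N K)ᴴ * stIso d N K = symProj d N :=
  stmt4_general d N K hd

end
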